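/- In the chord-space model with 0<q<1 and μ ∈ ℂ, let A₁, …, A_k be any finite sequence of operators with each A_t ∈ {a†_{R,0}, a†_{R,1}, a_{R,0}, a_{R,1}}, and let Ã_t = A_t + μW when A_t = a_{R,0} and Ã_t = A_t otherwise. Then ε((Ã₁ ∘ ⋯ ∘ Ã_k)(ω)) = Σ_{n=0}^{k} (μⁿ/[n]!_q)·ε((A₁ ∘ ⋯ ∘ A_k)(δ_{0ⁿ})), where 0ⁿ denotes the string of n zeros; moreover ε((A₁ ∘ ⋯ ∘ A_k)(δ_{0ⁿ})) = 0 for n > k, so the right-hand side equals the pairing ⟨ω|A₁⋯A_k|B_μ⟩ against the q-coherent state B_μ = Σ_n (μⁿ/[n]!_q)δ_{0ⁿ}. (In particular ⟨ω|H̃_{R,i₁}⋯H̃_{R,i_k}|ω⟩ = ⟨ω|H_{R,i₁}⋯H_{R,i_k}|B_μ⟩: the EoW-brane-deformed Hamiltonian moments equal undeformed moments against the q-coherent state.) -/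

import Mathlib

namespace DSSYK

/-- Binary strings (chord words); the letter `0` is `false`, the letter `1` is `true`. -/
abbrev Str : Type := List Bool

/-- The chord space: finitely supported complex functions on binary strings. -/
abbrev Sp : Type := Str →₀ ℂ

/-- Crossing weights: `Q 0 0 = q`, `Q 1 1 = q_m`, mixed crossings give `r`. -/
def Qmat (q qm r : ℝ) : Bool → Bool → ℂ
  | false, false => (q : ℂ)
  | true,  true  => (qm : ℂ)
  | _,     _     => (r : ℂ)

/-- Right creation `a†_{R,i}`: append the letter `i` on the right. -/
noncomputable def creR (i : Bool) : Sp →ₗ[ℂ] Sp :=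
  Finsupp.lift Sp ℂ Str fun w => Finsupp.single (w ++ [i]) 1

/-- Value of the right annihilation operator on a basis string: delete one letter
equal to `i`, weighted by the crossing factors with all letters to its right. -/
noncomputable def annVecR (Q : Bool → Bool → ℂ) (i : Bool) : Str → Sp
  | [] => 0
  | x :: t =>
      (if x = i then ((t.map (Q i)).prod) • Finsupp.single t (1 : ℂ) else 0)
        + Finsupp.mapDomain (List.cons x) (annVecR Q i t)

/-- Right annihilation `a_{R,i}`. -/
noncomputable def annR (Q : Bool → Bool → ℂ) (i : Bool) : Sp →ₗ[ℂ] Sp :=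
  Finsupp.lift Sp ℂ Str (annVecR Q i)

/-- Left creation `a†_{L,i}`: prepend the letter `i`. -/
noncomputable def creL (i : Bool) : Sp →ₗ[ℂ] Sp :=
  Finsupp.lift Sp ℂ Str fun w => Finsupp.single (i :: w) 1

/-- Value of the left annihilation operator on a basis string: delete one letter
equal to `i`, weighted by the crossing factors with all letters to its left. -/
noncomputable def annVecL (Q : Bool → Bool → ℂ) (i : Bool) : Str → Sp
  | [] => 0
  | x :: t =>
      (if x = i then Finsupp.single t (1 : ℂ) else 0)
        + Q i x • Finsupp.mapDomain (List.cons x) (annVecL Q i t)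

/-- Left annihilation `a_{L,i}`. -/
noncomputable def annL (Q : Bool → Bool → ℂ) (i : Bool) : Sp →ₗ[ℂ] Sp :=
  Finsupp.lift Sp ℂ Str (annVecL Q i)

/-- Diagonal weight operator `δ_w ↦ c₀^{N₀(w)} · c₁^{N₁(w)} · δ_w`, where `N₀, N₁`
count the `0`'s and `1`'s in `w`. -/
noncomputable def Wgen (c₀ c₁ : ℂ) : Sp →ₗ[ℂ] Sp :=
  Finsupp.lift Sp ℂ Str fun w =>
    Finsupp.single w (c₀ ^ (w.count false) * c₁ ^ (w.count true))

/-- The chord-counting weight operator `W δ_w = q^{N₀(w)} r^{N₁(w)} δ_w`. -/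
noncomputable def Wop (q r : ℝ) : Sp →ₗ[ℂ] Sp := Wgen (q : ℂ) (r : ℂ)

/-- Right boundary operators `H_{R,i} = a_{R,i} + a†_{R,i}`. -/
noncomputable def HR (Q : Bool → Bool → ℂ) (i : Bool) : Sp →ₗ[ℂ] Sp := annR Q i + creR i

/-- Left boundary operators `H_{L,i} = a_{L,i} + a†_{L,i}`. -/
noncomputable def HL (Q : Bool → Bool → ℂ) (i : Bool) : Sp →ₗ[ℂ] Sp := annL Q i + creL i

/-- The vacuum `ω = δ_{[]}` (the empty string). -/
noncomputable def vac : Sp := Finsupp.single [] 1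

/-- `ε v = v([])`, the coefficient of the empty string. -/
def eps (v : Sp) : ℂ := v []

end DSSYK

namespace DSSYK

/-- The q-integer `[n]_q = (1 − qⁿ)/(1 − q)` (as a complex number). -/
noncomputable def qIntC (q : ℝ) (n : ℕ) : ℂ := (1 - (q : ℂ) ^ n) / (1 - (q : ℂ))

/-- The q-factorial `[n]!_q = Π_{j=1}^{n} [j]_q` (as a complex number). -/
noncomputable def qFactC (q : ℝ) (n : ℕ) : ℂ := ∏ j ∈ Finset.range n, qIntC q (j + 1)

/-- The q-Pochhammer symbol `(q;q)_n = Π_{j=0}^{n−1}(1 − q^{j+1})` (as a complex number). -/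
noncomputable def qPochQC (q : ℝ) (n : ℕ) : ℂ := ∏ j ∈ Finset.range n, (1 - (q : ℂ) ^ (j + 1))

/-- The infinite q-Pochhammer symbol `(x;q)_∞ = Π_{j=0}^{∞}(1 − x qʲ)`. -/
noncomputable def qPochInfC (q : ℝ) (x : ℂ) : ℂ := ∏' j : ℕ, (1 - x * (q : ℂ) ^ j)

end DSSYK

namespace DSSYK

/-- Labels for the four right-boundary generators `a†_{R,0}, a†_{R,1}, a_{R,0}, a_{R,1}`. -/
inductive Gen : Type
  | cre0 | cre1 | ann0 | ann1

/-- The undeformed generator corresponding to a label. -/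
noncomputable def Gen.toOp (q qm r : ℝ) : Gen → Module.End ℂ Sp
  | .cre0 => creR false
  | .cre1 => creR true
  | .ann0 => annR (Qmat q qm r) false
  | .ann1 => annR (Qmat q qm r) true

/-- The EoW-brane deformed generator: `a_{R,0}` is replaced by `a_{R,0} + μW`,
all other generators are unchanged. -/
noncomputable def Gen.toOpT (q qm r : ℝ) (μ : ℂ) : Gen → Module.End ℂ Sp
  | .ann0 => annR (Qmat q qm r) false + μ • Wop q r
  | g => g.toOp q qm r

end DSSYK

/-!
Let `Sₙ` prepend `n` zeros to a word. The creation operators and `a_{R,1}` commute with `Sₙ`,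
whereas deleting the leading zero of `0ⁿ⁺¹w` crosses the other `n` zeros and the letters of `w`,
so `a_{R,0} Sₙ₊₁ = [n+1]_q Sₙ W + Sₙ₊₁ a_{R,0}`. Since `[n+1]_q · μⁿ⁺¹/[n+1]!_q = μ · μⁿ/[n]!_q`,
the coherent prefix `B = ∑ₙ μⁿ/[n]!_q Sₙ` satisfies `a_{R,0} B = B (a_{R,0} + μW)` and commutes
with the other generators. Each generator lowers word lengths by at most one, so a word of `k`
generators followed by `ε` kills everything supported on words longer than `k`; this gives the
vanishing claim and lets `B` be truncated at `n ≤ k`.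
-/

namespace DSSYK

open Finset

noncomputable def prepend (p : Str) : Module.End ℂ Sp :=
  Finsupp.lmapDomain ℂ ℂ (p ++ ·)

def longWords (n : ℕ) : Submodule ℂ Sp :=
  Finsupp.supported ℂ ℂ {u : Str | n ≤ u.length}

@[simp] lemma prepend_single (p w : Str) (c : ℂ) :
    prepend p (Finsupp.single w c) = Finsupp.single (p ++ w) c := by
  simp [prepend]

@[simp] lemma prepend_nil : prepend [] = 1 := by
  ext w : 2
  simp

@[simp] lemma creR_single (i : Bool) (w : Str) (c : ℂ) :
    creR i (Finsupp.single w c) = Finsupp.single (w ++ [i]) c := by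
  simp [creR]

@[simp] lemma annR_single (Q : Bool → Bool → ℂ) (i : Bool) (w : Str) (c : ℂ) :
    annR Q i (Finsupp.single w c) = c • annVecR Q i w := by
  simp [annR]

@[simp] lemma Wgen_single (c₀ c₁ : ℂ) (w : Str) (c : ℂ) :
    Wgen c₀ c₁ (Finsupp.single w c)
      = (c₀ ^ w.count false * c₁ ^ w.count true) • Finsupp.single w c := by
  rw [Wgen, Finsupp.lift_apply, Finsupp.sum_single_index (by simp), Finsupp.smul_single,
    Finsupp.smul_single, smul_eq_mul, smul_eq_mul, mul_comm]

lemma prod_map_eq_pow_count (f : Bool → ℂ) (w : Str) :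
    (w.map f).prod = f false ^ w.count false * f true ^ w.count true := by
  induction w with
  | nil => simp
  | cons x w ih => cases x <;> simp [ih, pow_succ] <;> ring

lemma creR_prepend (i : Bool) (p : Str) (x : Sp) :
    creR i (prepend p x) = prepend p (creR i x) := by
  induction x using Finsupp.induction_linear with
  | zero => simp
  | add x y hx hy => simp [hx, hy]
  | single w c => simp

lemma annVecR_append_of_notMem (Q : Bool → Bool → ℂ) {i : Bool} {p : Str} (hp : i ∉ p)
    (w : Str) : annVecR Q i (p ++ w) = Finsupp.mapDomain (p ++ ·) (annVecR Q i w) := by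
  induction p with
  | nil => exact Finsupp.mapDomain_id.symm
  | cons x p ih =>
    obtain ⟨hx, hp⟩ := not_or.mp (List.mem_cons.not.mp hp)
    rw [List.cons_append, annVecR, if_neg (Ne.symm hx), zero_add, ih hp,
      ← Finsupp.mapDomain_comp]
    rfl

lemma annVecR_replicate_append (Q : Bool → Bool → ℂ) (i : Bool) (n : ℕ) (w : Str) :
    annVecR Q i (List.replicate (n + 1) i ++ w)
      = ((∑ j ∈ range (n + 1), Q i i ^ j) * (w.map (Q i)).prod)
          • Finsupp.single (List.replicate n i ++ w) 1
        + Finsupp.mapDomain (List.replicate (n + 1) i ++ ·) (annVecR Q i w) := by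
  induction n with
  | zero => simp [annVecR]
  | succ n ih =>
    have hprod : ((List.replicate (n + 1) i ++ w).map (Q i)).prod
        = Q i i ^ (n + 1) * (w.map (Q i)).prod := by
      simp [List.prod_replicate]
    rw [show List.replicate (n + 2) i ++ w = i :: (List.replicate (n + 1) i ++ w) from rfl,
      annVecR, if_pos rfl, ih, Finsupp.mapDomain_add, Finsupp.mapDomain_smul,
      Finsupp.mapDomain_single, ← Finsupp.mapDomain_comp, hprod, sum_range_succ _ (n + 1),
      add_mul, add_smul]
    change _ + (_ • Finsupp.single (List.replicate (n + 1) i ++ w) 1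
      + Finsupp.mapDomain (List.replicate (n + 2) i ++ ·) _) = _
    abel

lemma annR_prepend_of_notMem (Q : Bool → Bool → ℂ) {i : Bool} {p : Str} (hp : i ∉ p) (x : Sp) :
    annR Q i (prepend p x) = prepend p (annR Q i x) := by
  induction x using Finsupp.induction_linear with
  | zero => simp
  | add x y hx hy => simp [hx, hy]
  | single w c => simp [annVecR_append_of_notMem Q hp, prepend]

lemma annR_prepend_replicate (Q : Bool → Bool → ℂ) (i : Bool) (n : ℕ) (x : Sp) :
    annR Q i (prepend (List.replicate (n + 1) i) x)
      = (∑ j ∈ range (n + 1), Q i i ^ j)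
          • prepend (List.replicate n i) (Wgen (Q i false) (Q i true) x)
        + prepend (List.replicate (n + 1) i) (annR Q i x) := by
  induction x using Finsupp.induction_linear with
  | zero => simp
  | add x y hx hy => simp only [map_add, hx, hy, smul_add]; abel
  | single w c =>
    rw [prepend_single, annR_single, annVecR_replicate_append, Wgen_single, map_smul,
      prepend_single, annR_single, map_smul, prod_map_eq_pow_count, smul_add, smul_smul,
      smul_smul, ← Finsupp.smul_single_one _ c, smul_smul, mul_comm c]
    rfl

lemma qIntC_eq_geom_sum {q : ℝ} (hq : q ≠ 1) (n : ℕ) :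
    qIntC q n = ∑ j ∈ range n, (q : ℂ) ^ j := by
  have hq' : (q : ℂ) ≠ 1 := by exact_mod_cast hq
  rw [geom_sum_eq hq', qIntC, ← neg_div_neg_eq, neg_sub, neg_sub]

lemma qIntC_succ_ne_zero {q : ℝ} (hq0 : 0 ≤ q) (hq1 : q ≠ 1) (n : ℕ) : qIntC q (n + 1) ≠ 0 := by
  rw [qIntC_eq_geom_sum hq1]
  exact_mod_cast (show 0 < ∑ j ∈ range (n + 1), q ^ j by rw [sum_range_succ']; positivity).ne'

lemma div_qFactC_succ_mul_qIntC {q : ℝ} (hq0 : 0 ≤ q) (hq1 : q ≠ 1) (μ : ℂ) (n : ℕ) :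
    μ ^ (n + 1) / qFactC q (n + 1) * qIntC q (n + 1) = μ * (μ ^ n / qFactC q n) := by
  rw [qFactC, prod_range_succ, ← qFactC, div_mul_eq_div_div,
    div_mul_cancel₀ _ (qIntC_succ_ne_zero hq0 hq1 n), pow_succ', mul_div_assoc]

lemma annR_false_prepend_zeros {q : ℝ} (hq : q ≠ 1) (qm r : ℝ) (n : ℕ) (x : Sp) :
    annR (Qmat q qm r) false (prepend (List.replicate (n + 1) false) x)
      = qIntC q (n + 1) • prepend (List.replicate n false) (Wop q r x)
        + prepend (List.replicate (n + 1) false) (annR (Qmat q qm r) false x) := by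
  rw [annR_prepend_replicate, qIntC_eq_geom_sum hq]
  rfl

lemma lift_mem_supported {α β R M : Type*} [Semiring R] [AddCommMonoid M] [Module R M]
    {s : Set α} {t : Set β} {f : α → β →₀ M} (hf : ∀ a ∈ s, f a ∈ Finsupp.supported M R t)
    {x : α →₀ R} (hx : x ∈ Finsupp.supported R R s) :
    Finsupp.lift (β →₀ M) R α f x ∈ Finsupp.supported M R t := by
  rw [Finsupp.lift_apply]
  exact Submodule.sum_mem _ fun a ha =>
    Submodule.smul_mem _ _ (hf a ((Finsupp.mem_supported R x).mp hx ha))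

lemma annVecR_mem_supported (Q : Bool → Bool → ℂ) (i : Bool) (w : Str) :
    annVecR Q i w ∈ Finsupp.supported ℂ ℂ {u : Str | u.length + 1 = w.length} := by
  induction w with
  | nil => exact zero_mem _
  | cons x t ih =>
    refine add_mem ?_ (Finsupp.supported_comap_lmapDomain ℂ ℂ (List.cons x) _
      (Finsupp.supported_mono (fun u hu => ?_) ih))
    · split_ifs
      · exact Submodule.smul_mem _ _ (Finsupp.single_mem_supported ℂ _ rfl)
      · exact zero_mem _
    · simp only [Set.mem_preimage, Set.mem_ofPred_eq, List.length_cons] at hu ⊢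
      omega

lemma longWords_mono {m n : ℕ} (h : m ≤ n) : longWords n ≤ longWords m :=
  Finsupp.supported_mono fun _ hu => h.trans hu

lemma prepend_mem_longWords (p : Str) (x : Sp) : prepend p x ∈ longWords p.length := by
  refine Finsupp.supported_comap_lmapDomain ℂ ℂ _ _ ?_
  have : (p ++ ·) ⁻¹' {u : Str | p.length ≤ u.length} = Set.univ :=
    Set.eq_univ_of_forall fun u => by simp
  rw [this, Finsupp.supported_univ]
  exact Submodule.mem_top

lemma creR_mem_longWords (i : Bool) {n : ℕ} {x : Sp} (hx : x ∈ longWords n) :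
    creR i x ∈ longWords (n + 1) := by
  refine lift_mem_supported (fun w hw => Finsupp.single_mem_supported ℂ _ ?_) hx
  simp only [Set.mem_ofPred_eq, List.length_append, List.length_singleton] at hw ⊢
  omega

lemma annR_mem_longWords (Q : Bool → Bool → ℂ) (i : Bool) {n : ℕ} {x : Sp}
    (hx : x ∈ longWords (n + 1)) : annR Q i x ∈ longWords n := by
  refine lift_mem_supported (fun w hw => Finsupp.supported_mono (fun u hu => ?_)
    (annVecR_mem_supported Q i w)) hx
  simp only [Set.mem_ofPred_eq] at hw hu ⊢
  omega

lemma Gen.toOp_mem_longWords (q qm r : ℝ) (g : Gen) {n : ℕ} {x : Sp}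
    (hx : x ∈ longWords (n + 1)) : g.toOp q qm r x ∈ longWords n := by
  cases g
  case cre0 | cre1 => exact longWords_mono (by omega) (creR_mem_longWords _ hx)
  case ann0 | ann1 => exact annR_mem_longWords _ _ hx

lemma prod_toOp_mem_longWords (q qm r : ℝ) (L : List Gen) {n : ℕ} {x : Sp}
    (hx : x ∈ longWords (n + L.length)) : (L.map (Gen.toOp q qm r)).prod x ∈ longWords n := by
  induction L generalizing n with
  | nil => simpa using hx
  | cons g L ih =>
    rw [List.map_cons, List.prod_cons, Module.End.mul_apply]
    exact g.toOp_mem_longWords q qm r (ih (by rwa [List.length_cons, ← add_assoc,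
      add_right_comm] at hx))

lemma eps_eq_zero_of_mem_longWords {x : Sp} (hx : x ∈ longWords 1) : eps x = 0 :=
  (Finsupp.mem_supported' _ _).mp hx [] (by simp)

lemma eps_prod_toOp_eq_zero (q qm r : ℝ) (L : List Gen) {x : Sp}
    (hx : x ∈ longWords (L.length + 1)) : eps ((L.map (Gen.toOp q qm r)).prod x) = 0 :=
  eps_eq_zero_of_mem_longWords (prod_toOp_mem_longWords q qm r L (by rwa [add_comm]))

lemma eps_prod_toOp_eq_of_sub_mem (q qm r : ℝ) (L : List Gen) {x y : Sp}
    (h : x - y ∈ longWords (L.length + 1)) :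
    eps ((L.map (Gen.toOp q qm r)).prod x) = eps ((L.map (Gen.toOp q qm r)).prod y) := by
  have := eps_prod_toOp_eq_zero q qm r L h
  rwa [map_sub, eps, Finsupp.sub_apply, sub_eq_zero] at this

/-- Prefixing by the truncated q-coherent state: `coherentPrefix q μ N vac` is the truncation
`∑_{n<N} μⁿ/[n]!_q δ_{0ⁿ}` of `B_μ`. -/
noncomputable def coherentPrefix (q : ℝ) (μ : ℂ) (N : ℕ) : Module.End ℂ Sp :=
  ∑ n ∈ range N, (μ ^ n / qFactC q n) • prepend (List.replicate n false)

lemma coherentPrefix_apply (q : ℝ) (μ : ℂ) (N : ℕ) (x : Sp) :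
    coherentPrefix q μ N x
      = ∑ n ∈ range N, (μ ^ n / qFactC q n) • prepend (List.replicate n false) x := by
  simp [coherentPrefix]

lemma coherentPrefix_succ_sub_mem (q : ℝ) (μ : ℂ) (N : ℕ) (x : Sp) :
    coherentPrefix q μ (N + 1) x - coherentPrefix q μ N x ∈ longWords N := by
  rw [coherentPrefix_apply, coherentPrefix_apply, sum_range_succ, add_sub_cancel_left]
  simpa using Submodule.smul_mem _ (μ ^ N / qFactC q N)
    (prepend_mem_longWords (List.replicate N false) x)

lemma creR_coherentPrefix (i : Bool) (q : ℝ) (μ : ℂ) (N : ℕ) (x : Sp) :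
    creR i (coherentPrefix q μ N x) = coherentPrefix q μ N (creR i x) := by
  simp [coherentPrefix_apply, creR_prepend]

lemma annR_true_coherentPrefix (Q : Bool → Bool → ℂ) (q : ℝ) (μ : ℂ) (N : ℕ) (x : Sp) :
    annR Q true (coherentPrefix q μ N x) = coherentPrefix q μ N (annR Q true x) := by
  simp [coherentPrefix_apply, annR_prepend_of_notMem]

lemma annR_false_coherentPrefix {q : ℝ} (hq0 : 0 ≤ q) (hq1 : q ≠ 1) (qm r : ℝ) (μ : ℂ)
    (N : ℕ) (x : Sp) :
    annR (Qmat q qm r) false (coherentPrefix q μ (N + 1) x)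
      = μ • coherentPrefix q μ N (Wop q r x)
        + coherentPrefix q μ (N + 1) (annR (Qmat q qm r) false x) := by
  simp only [coherentPrefix_apply, map_sum, map_smul]
  rw [sum_range_succ', sum_range_succ' _ N]
  simp only [annR_false_prepend_zeros hq1, smul_add, sum_add_distrib, smul_smul,
    div_qFactC_succ_mul_qIntC hq0 hq1, Finset.smul_sum]
  simp only [pow_zero, List.replicate_zero, prepend_nil, Module.End.one_apply]
  abel

lemma Gen.toOp_coherentPrefix_sub_mem {q : ℝ} (hq0 : 0 ≤ q) (hq1 : q ≠ 1) (qm r : ℝ) (μ : ℂ)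
    (g : Gen) (N : ℕ) (x : Sp) :
    g.toOp q qm r (coherentPrefix q μ (N + 1) x)
        - coherentPrefix q μ (N + 1) (g.toOpT q qm r μ x) ∈ longWords N := by
  cases g
  case ann0 =>
    rw [Gen.toOp, Gen.toOpT, annR_false_coherentPrefix hq0 hq1, LinearMap.add_apply,
      LinearMap.smul_apply, map_add, map_smul]
    convert neg_mem (Submodule.smul_mem _ μ (coherentPrefix_succ_sub_mem q μ N (Wop q r x)))
      using 1
    rw [smul_sub]
    abel
  all_goals
    simp only [Gen.toOp, Gen.toOpT, creR_coherentPrefix, annR_true_coherentPrefix, sub_self]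
    exact zero_mem _

theorem eps_prod_toOpT_eq {q : ℝ} (hq0 : 0 ≤ q) (hq1 : q ≠ 1) (qm r : ℝ) (μ : ℂ)
    (L : List Gen) (x : Sp) :
    eps ((L.map (Gen.toOpT q qm r μ)).prod x)
      = eps ((L.map (Gen.toOp q qm r)).prod (coherentPrefix q μ (L.length + 1) x)) := by
  induction L using List.reverseRecOn generalizing x with
  | nil => simp [coherentPrefix_apply, qFactC]
  | append_singleton L g ih =>
    simp only [List.map_append, List.map_singleton, List.prod_append, List.prod_singleton,
      Module.End.mul_apply, List.length_append, List.length_singleton]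
    calc eps ((L.map (Gen.toOpT q qm r μ)).prod (g.toOpT q qm r μ x))
        = eps ((L.map (Gen.toOp q qm r)).prod
            (coherentPrefix q μ (L.length + 1) (g.toOpT q qm r μ x))) := ih _
      _ = eps ((L.map (Gen.toOp q qm r)).prod
            (coherentPrefix q μ (L.length + 1 + 1) (g.toOpT q qm r μ x))) :=
        (eps_prod_toOp_eq_of_sub_mem q qm r L (coherentPrefix_succ_sub_mem q μ _ _)).symm
      _ = eps ((L.map (Gen.toOp q qm r)).prod
            (g.toOp q qm r (coherentPrefix q μ (L.length + 1 + 1) x))) :=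
        (eps_prod_toOp_eq_of_sub_mem q qm r L
          (g.toOp_coherentPrefix_sub_mem hq0 hq1 qm r μ _ _)).symm

end DSSYK

open DSSYK in
/-- for any word `A₁,…,A_k` in the generators
`{a†_{R,0}, a†_{R,1}, a_{R,0}, a_{R,1}}` with EoW-deformation `Ã_t`,
`ε((Ã₁∘⋯∘Ã_k)(ω)) = Σ_{n=0}^{k} (μⁿ/[n]!_q)·ε((A₁∘⋯∘A_k)(δ_{0ⁿ}))`, and
`ε((A₁∘⋯∘A_k)(δ_{0ⁿ})) = 0` for `n > k`; i.e. the deformed vacuum moments equal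
the undeformed moments paired against the q-coherent state `B_μ = Σ_n (μⁿ/[n]!_q) δ_{0ⁿ}`. -/
theorem stmt_8 (q qm r : ℝ) (hq0 : 0 < q) (hq1 : q < 1) (μ : ℂ)
    (k : ℕ) (g : Fin k → Gen) :
    (eps (((List.ofFn fun t => (g t).toOpT q qm r μ).prod) vac)
      = ∑ n ∈ Finset.range (k + 1), (μ ^ n / qFactC q n)
          * eps (((List.ofFn fun t => (g t).toOp q qm r).prod)
              (Finsupp.single (List.replicate n false) 1))) ∧
    (∀ n : ℕ, k < n →
      eps (((List.ofFn fun t => (g t).toOp q qm r).prod)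
        (Finsupp.single (List.replicate n false) 1)) = 0) := by
  have hofFn {β : Type} (f : Gen → β) : (List.ofFn fun t => f (g t)) = (List.ofFn g).map f :=
    List.map_ofFn.symm
  refine ⟨?_, fun n hn => ?_⟩
  · rw [hofFn, hofFn, eps_prod_toOpT_eq hq0.le hq1.ne, List.length_ofFn, coherentPrefix_apply]
    simp only [vac, prepend_single, List.append_nil, map_sum, map_smul, eps,
      Finsupp.finsetSum_apply, Finsupp.smul_apply, smul_eq_mul]
  · rw [hofFn]
    exact eps_prod_toOp_eq_zero q qm r _
      (Finsupp.single_mem_supported ℂ _ (by simpa using hn))
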